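/- arXiv:2409.10159 — 3 statements merged into one kernel-verified Lean document; each statement's English description precedes it below -/
import Mathlib

section
/- The blocks {0,1,2,8} + 2i (mod 10) and {1,0,5,7} + 2i (mod 10), for i = 0,...,4, form a regular-graph design with λ=1 and block size 4 of order 10 whose doubled pairs are the edges of the Petersen graph: each of the 15 edge pairs occurs in exactly 2 of the 10 blocks and each of the remaining 30 pairs occurs in exactly 1 block, and the doubled-pair graph is 3-regular with girth 5. -/
/-!
The graph of doubled pairs is strongly regular with parameters `(10, 3, 0, 1)`, which is a
finite computation. Adjacent vertices having no common neighbour rules out triangles, and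
distinct vertices having at most one common neighbour rules out `4`-cycles. Since `girth` is `0`
on acyclic graphs, a cycle (here `0, 1, 5, 9, 8`) is also needed to conclude `5 ≤ girth`.
-/

namespace SimpleGraph

variable {V : Type*} {G : SimpleGraph V}

lemma five_le_egirth_of_commonNeighbors
    (hadj : ∀ v w, G.Adj v w → G.commonNeighbors v w = ∅)
    (hne : ∀ v w, v ≠ w → (G.commonNeighbors v w).Subsingleton) : 5 ≤ G.egirth := by
  refine le_egirth.mpr fun a w hw => ?_
  by_contra! hlt
  have hlen : w.length = 3 ∨ w.length = 4 := by
    have := hw.three_le_length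
    norm_cast at hlt
    omega
  have hnodup := hw.support_nodup
  rcases w with _ | ⟨h₁, _ | ⟨h₂, _ | ⟨h₃, _ | ⟨h₄, _ | ⟨_, _⟩⟩⟩⟩⟩ <;>
    simp only [Walk.length_cons, Walk.length_nil, Walk.support_cons, Walk.support_nil,
      List.tail_cons] at hlen hnodup <;> try omega
  · rename_i b c
    exact Set.eq_empty_iff_forall_notMem.mp (hadj a b h₁) c ⟨h₃.symm, h₂⟩
  · rename_i b c d
    simp only [List.nodup_cons, List.mem_cons, List.not_mem_nil, or_false, not_or] at hnodup
    obtain ⟨⟨-, hbd, -⟩, ⟨-, hca⟩, -⟩ := hnodup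
    exact hbd (hne a c (Ne.symm hca) ⟨h₁, h₂.symm⟩ ⟨h₄.symm, h₃⟩)

variable [Fintype V] [DecidableRel G.Adj] {n k μ : ℕ}

lemma IsSRGWith.five_le_girth (h : G.IsSRGWith n k 0 μ) (hμ : μ ≤ 1) (hG : ¬ G.IsAcyclic) :
    5 ≤ G.girth := by
  have hadj (v w : V) (hvw : G.Adj v w) : G.commonNeighbors v w = ∅ :=
    Set.eq_empty_of_forall_notMem <| by
      simpa [Fintype.card_eq_zero_iff] using h.of_adj v w hvw
  have hne (v w : V) (hvw : v ≠ w) : (G.commonNeighbors v w).Subsingleton := by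
    rw [← Set.subsingleton_coe, ← Fintype.card_le_one_iff_subsingleton]
    by_cases hvw' : G.Adj v w
    · simp [h.of_adj v w hvw']
    · exact (h.of_not_adj hvw hvw').trans_le hμ
  exact ENat.toNat_le_toNat (five_le_egirth_of_commonNeighbors hadj hne)
    (egirth_eq_top.not.mpr hG)

end SimpleGraph

section DoubledPairs

variable {α : Type*} [DecidableEq α]

def pairCount (B : Multiset (Finset α)) (x y : α) : ℕ :=
  Multiset.card (B.filter fun b => x ∈ b ∧ y ∈ b)

lemma pairCount_comm (B : Multiset (Finset α)) (x y : α) :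
    pairCount B x y = pairCount B y x := by
  simp only [pairCount, and_comm]

def doubledPairGraph (B : Multiset (Finset α)) : SimpleGraph α where
  Adj x y := x ≠ y ∧ pairCount B x y = 2
  symm := ⟨fun x y h => ⟨h.1.symm, pairCount_comm B x y ▸ h.2⟩⟩
  loopless := ⟨fun _ h => h.1 rfl⟩

instance (B : Multiset (Finset α)) : DecidableRel (doubledPairGraph B).Adj :=
  fun _ _ => inferInstanceAs (Decidable (_ ≠ _ ∧ pairCount B _ _ = 2))

def translateOrbit [AddMonoid α] (b : Finset α) (t : α) (n : ℕ) : Multiset (Finset α) :=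
  (Multiset.range n).map fun i => b.image (· + i • t)

end DoubledPairs

def petersenDesign : Multiset (Finset (ZMod 10)) :=
  translateOrbit {0, 1, 2, 8} 2 5 + translateOrbit {0, 1, 5, 7} 2 5

lemma pairCount_petersenDesign_eq_one_or_two (x y : ZMod 10) (hxy : x ≠ y) :
    pairCount petersenDesign x y = 1 ∨ pairCount petersenDesign x y = 2 := by
  revert x y
  decide

lemma isSRGWith_doubledPairGraph_petersenDesign :
    (doubledPairGraph petersenDesign).IsSRGWith 10 3 0 1 where
  card := rfl
  regular := by unfold SimpleGraph.IsRegularOfDegree; decide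
  of_adj := by decide
  of_not_adj := by unfold Pairwise; decide

lemma not_isAcyclic_doubledPairGraph_petersenDesign :
    ¬ (doubledPairGraph petersenDesign).IsAcyclic := fun h =>
  h (.cons (v := 1) (by decide) <| .cons (v := 5) (by decide) <| .cons (v := 9) (by decide) <|
      .cons (v := 8) (by decide) <| .cons (v := 0) (by decide) .nil)
    ((SimpleGraph.Walk.cons_isCycle_iff _ _).mpr
      ⟨by rw [SimpleGraph.Walk.isPath_def]; decide, by decide⟩)

open scoped Classical in
/-- the ten blocks obtained from {0,1,2,8} and {0,1,5,7} under
x ↦ x + 2 (mod 10) form a regular-graph design of order 10 with λ = 1 and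
block size 4 whose doubled pairs form a 3-regular graph of girth ≥ 5
(the Petersen graph). -/
theorem stmt_15 :
    let B : Multiset (Finset (ZMod 10)) :=
      ((Multiset.range 5).map fun i =>
        ({0 + 2 * (i : ZMod 10), 1 + 2 * (i : ZMod 10), 2 + 2 * (i : ZMod 10),
          8 + 2 * (i : ZMod 10)} : Finset (ZMod 10))) +
      ((Multiset.range 5).map fun i =>
        ({0 + 2 * (i : ZMod 10), 1 + 2 * (i : ZMod 10), 5 + 2 * (i : ZMod 10),
          7 + 2 * (i : ZMod 10)} : Finset (ZMod 10)))
    let cnt : ZMod 10 → ZMod 10 → ℕ := fun x y =>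
      Multiset.card (B.filter fun b => x ∈ b ∧ y ∈ b)
    ∃ G : SimpleGraph (ZMod 10),
      (∀ x y : ZMod 10, G.Adj x y ↔ x ≠ y ∧ cnt x y = 2) ∧
      (∀ x y : ZMod 10, x ≠ y → cnt x y = 1 ∨ cnt x y = 2) ∧
      G.IsRegularOfDegree 3 ∧ 5 ≤ G.girth := by
  intro B cnt
  have hB : B = petersenDesign := by decide
  have hcnt : cnt = pairCount petersenDesign := by rw [← hB]; rfl
  have hSRG := isSRGWith_doubledPairGraph_petersenDesign
  refine ⟨doubledPairGraph petersenDesign, fun x y => by rw [hcnt]; rfl,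
    by rw [hcnt]; exact pairCount_petersenDesign_eq_one_or_two, by convert hSRG.regular, ?_⟩
  exact hSRG.five_le_girth le_rfl not_isAcyclic_doubledPairGraph_petersenDesign
end

section
/- Suppose m ≥ 1 and there exists a set T of m triples of the form (0, x, z) with 0 < x < z such that the multiset union of {x, z−x, z} over T is exactly {3, 4, ..., 3m+2} (each once) when m ≡ 0,1 (mod 4), or {3, 4, ..., 3m+1, 3m+3} when m ≡ 2,3 (mod 4). Let n = 6m+5. Then the translates modulo n of the triples {0,1,n−1} and {0,x,z} for (0,x,z) ∈ T under x ↦ x+1 (mod n) form a regular-graph design with λ=1 and block size 3 for the cycle Cₙ. -/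
/-!
Translating a block `S` by `g` covers the pair `{x, y}` exactly when `(x - g, y - g)` is an
ordered pair of points of `S` with difference `y - x`, so the translates of `S` cover `{x, y}` as
often as `y - x` occurs among the differences of `S`. A triple `{u, v, w}` has the six nonzero
differences `±(v - u), ±(w - v), ±(w - u)`. For the base blocks `{-1, 0, 1}` and `{0, a, b}`,
`(a, b) ∈ T`, the positive representatives are `1, 1, 2` and the prescribed multiset
`{3, …, 3m+2}` (or `{3, …, 3m+1, 3m+3}`, where `3m+3 ≡ -(3m+2)`). Together with their negatives
they hit every nonzero residue modulo `6m+5` once, and `±1` a second time.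
-/

open scoped Pointwise

section Development

variable {G : Type*} [AddCommGroup G] [DecidableEq G]

def development [Fintype G] (S : Finset G) : Multiset (Finset G) :=
  Finset.univ.val.map fun g : G => g +ᵥ S

/-- The diagonal pairs contribute `|S|` zeros, which never matter for pairs `x ≠ y`. -/
def differences (S : Finset G) : Multiset G :=
  (S ×ˢ S).val.map fun p => p.2 - p.1

def tripleDifferences (t : G × G × G) : Multiset G :=
  {t.2.1 - t.1, t.2.2 - t.2.1, t.2.2 - t.1}

theorem card_filter_development [Fintype G] (S : Finset G) (x y : G) :
    Multiset.card ((development S).filter fun b => x ∈ b ∧ y ∈ b) =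
      (differences S).count (y - x) := by
  rw [development, differences, Multiset.filter_map, Multiset.card_map, Multiset.count_map,
    ← Finset.filter_val, ← Finset.filter_val]
  simp only [Function.comp_apply, ← Finset.neg_vadd_mem_iff, vadd_eq_add, neg_add_eq_sub]
  refine Finset.card_nbij' (fun g => (x - g, y - g)) (fun p => x - p.1) ?_ ?_ ?_ ?_
  · intro g hg
    simp only [Finset.coe_filter, Finset.mem_univ, true_and, Set.mem_ofPred_eq,
      Finset.mem_product] at hg ⊢
    exact ⟨hg, by abel⟩
  · rintro ⟨a, b⟩ hp
    simp only [Finset.coe_filter, Finset.mem_univ, true_and, Set.mem_ofPred_eq,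
      Finset.mem_product, eq_sub_iff_add_eq] at hp ⊢
    obtain ⟨⟨ha, hb⟩, rfl⟩ := hp
    simp only [sub_sub_cancel, ha, true_and]
    convert hb using 1
    abel
  · intro g _
    simp
  · rintro ⟨a, b⟩ hp
    simp only [Finset.coe_filter, Finset.mem_product, Set.mem_ofPred_eq, eq_sub_iff_add_eq] at hp
    obtain ⟨-, rfl⟩ := hp
    simp only [sub_sub_cancel, Prod.mk.injEq, true_and]
    abel

theorem count_differences_triple {u v w : G} (huv : u ≠ v) (huw : u ≠ w) (hvw : v ≠ w)
    {d : G} (hd : d ≠ 0) :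
    (differences {u, v, w}).count d =
      (tripleDifferences (u, v, w)).count d + (tripleDifferences (u, v, w)).count (-d) := by
  have hval : ({u, v, w} : Finset G).val = u ::ₘ v ::ₘ w ::ₘ 0 := by
    rw [Finset.insert_val_of_notMem (by simp [huv, huw]),
      Finset.insert_val_of_notMem (by simp [hvw])]
    rfl
  simp only [differences, tripleDifferences, Finset.product_val, hval, Multiset.insert_eq_cons,
    ← Multiset.cons_zero, Multiset.cons_product, Multiset.zero_product, Multiset.map_add,
    Multiset.map_cons, Multiset.map_zero, Multiset.count_add, Multiset.count_cons,
    Multiset.count_zero, sub_self, hd, neg_eq_iff_eq_neg, neg_sub, if_false]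
  omega

theorem card_filter_bind_development [Fintype G] (s : Multiset (G × G × G))
    (hs : ∀ t ∈ s, t.1 ≠ t.2.1 ∧ t.1 ≠ t.2.2 ∧ t.2.1 ≠ t.2.2) {x y : G} (hxy : x ≠ y) :
    Multiset.card ((s.bind fun t => development {t.1, t.2.1, t.2.2}).filter
        fun b => x ∈ b ∧ y ∈ b) =
      (s.bind tripleDifferences).count (y - x) + (s.bind tripleDifferences).count (x - y) := by
  rw [Multiset.filter_bind, Multiset.card_bind, Multiset.count_bind, Multiset.count_bind,
    ← Multiset.sum_map_add, ← neg_sub y x]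
  refine congrArg Multiset.sum (Multiset.map_congr rfl fun t ht => ?_)
  obtain ⟨huv, huw, hvw⟩ := hs t ht
  rw [Function.comp_apply, card_filter_development,
    count_differences_triple huv huw hvw (sub_ne_zero.2 hxy.symm)]

end Development

theorem ZMod.range_map_natCast (n : ℕ) [NeZero n] :
    (Multiset.range n).map (Nat.cast : ℕ → ZMod n) = Finset.univ.val := by
  refine (Multiset.Nodup.ext ((Multiset.nodup_range n).map_on fun a ha b hb hab => ?_)
    Finset.univ.nodup).2 fun g => ?_
  · rw [← ZMod.val_cast_of_lt (Multiset.mem_range.1 ha), hab,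
      ZMod.val_cast_of_lt (Multiset.mem_range.1 hb)]
  · simpa using ⟨g.val, g.val_lt, g.natCast_zmod_val⟩

theorem ZMod.map_range_natCast {α : Type*} (n : ℕ) [NeZero n] (f : ZMod n → α) :
    (Multiset.range n).map (fun i : ℕ => f i) = Finset.univ.val.map f := by
  rw [← ZMod.range_map_natCast, Multiset.map_map]
  rfl

def baseTriples (n : ℕ) (P : Multiset (ℕ × ℕ)) : Multiset (ZMod n × ZMod n × ZMod n) :=
  (-1, 0, 1) ::ₘ P.map fun p => (0, (p.1 : ZMod n), (p.2 : ZMod n))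

theorem baseTriples_pairwise_ne {n : ℕ} (hn : 2 < n) {P : Multiset (ℕ × ℕ)}
    (hP : ∀ p ∈ P, 0 < p.1 ∧ p.1 < p.2 ∧ p.2 < n) :
    ∀ t ∈ baseTriples n P, t.1 ≠ t.2.1 ∧ t.1 ≠ t.2.2 ∧ t.2.1 ≠ t.2.2 := by
  have : Fact (1 < n) := ⟨by omega⟩
  have : Fact (2 < n) := ⟨hn⟩
  have hcast_ne {a b : ℕ} (hab : a < b) (hb : b < n) : (a : ZMod n) ≠ b := by
    rw [Ne, ZMod.natCast_eq_natCast_iff', Nat.mod_eq_of_lt (hab.trans hb), Nat.mod_eq_of_lt hb]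
    exact hab.ne
  simp only [baseTriples, Multiset.forall_mem_cons, Multiset.forall_mem_map_iff]
  refine ⟨⟨neg_ne_zero.2 one_ne_zero, ZMod.neg_one_ne_one, zero_ne_one⟩, fun p hp => ?_⟩
  obtain ⟨h1, h2, h3⟩ := hP p hp
  exact ⟨Nat.cast_zero (R := ZMod n) ▸ hcast_ne h1 (by omega),
    Nat.cast_zero (R := ZMod n) ▸ hcast_ne (by omega) h3, hcast_ne h2 h3⟩

/-- The first summand on the left maps over `Multiset.range n` coerced to `Multiset (ZMod n)`
(through the monad structure of `Multiset`), exactly as in the block multiset of `stmt_16`. -/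
theorem blocks_eq_bind_development (n : ℕ) [NeZero n] (P : Multiset (ℕ × ℕ)) :
    ((Multiset.range n).map fun i =>
        ({(i : ZMod n), (i : ZMod n) + 1, (i : ZMod n) - 1} : Finset (ZMod n))) +
      ((Multiset.range n).bind fun i =>
        P.map fun p =>
          ({(i : ZMod n), (i : ZMod n) + (p.1 : ZMod n), (i : ZMod n) + (p.2 : ZMod n)} :
            Finset (ZMod n))) =
    (baseTriples n P).bind fun t => development {t.1, t.2.1, t.2.2} := by
  rw [baseTriples, Multiset.cons_bind, Multiset.bind_map, Multiset.bind_map_comm]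
  simp only [development, bind, Multiset.pure_def, Multiset.bind_singleton,
    ZMod.range_map_natCast]
  congr 1
  · refine Multiset.map_congr rfl fun g _ => ?_
    ext
    simp [Finset.vadd_finset_insert, sub_eq_add_neg]
    tauto
  · refine Multiset.bind_congr fun p _ => ?_
    rw [ZMod.map_range_natCast n fun g : ZMod n => ({g, g + p.1, g + p.2} : Finset _)]
    refine Multiset.map_congr rfl fun g _ => ?_
    simp [Finset.vadd_finset_insert]

theorem bind_tripleDifferences_baseTriples (n : ℕ) {P : Multiset (ℕ × ℕ)}
    (hP : ∀ p ∈ P, p.1 ≤ p.2) :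
    (baseTriples n P).bind tripleDifferences =
      (({1, 1, 2} + P.bind fun p => {p.1, p.2 - p.1, p.2}) : Multiset ℕ).map Nat.cast := by
  rw [baseTriples, Multiset.cons_bind, Multiset.bind_map, Multiset.map_add, Multiset.map_bind]
  congr 1
  · simp [tripleDifferences, one_add_one_eq_two]
  · refine Multiset.bind_congr fun p hp => ?_
    simp [tripleDifferences, Nat.cast_sub (hP p hp)]

theorem ZMod.count_map_natCast {n : ℕ} [NeZero n] {R : Multiset ℕ} (hR : ∀ i ∈ R, i < n)
    (d : ZMod n) : (R.map (Nat.cast : ℕ → ZMod n)).count d = R.count d.val := by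
  rw [← Multiset.count_map_eq_count' _ _ (ZMod.val_injective n), Multiset.map_map]
  congr
  conv_rhs => rw [← Multiset.map_id R]
  exact Multiset.map_congr rfl fun i hi => ZMod.val_cast_of_lt (hR i hi)

theorem Multiset.count_map_add_range (N c v : ℕ) :
    ((Multiset.range N).map (· + c)).count v = if c ≤ v ∧ v < N + c then 1 else 0 := by
  rw [Multiset.count_eq_of_nodup ((Multiset.nodup_range N).map (add_left_injective c))]
  refine if_congr ⟨?_, fun h => Multiset.mem_map.2 ⟨v - c, ?_, ?_⟩⟩ rfl rfl
  · simp only [Multiset.mem_map, Multiset.mem_range]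
    omega
  · simp only [Multiset.mem_range]
    omega
  · omega

def prescribedDifferences (m : ℕ) : Multiset ℕ :=
  if m % 4 = 0 ∨ m % 4 = 1 then
    (Multiset.range (3 * m)).map (· + 3)
  else
    (Multiset.range (3 * m - 1)).map (· + 3) + {3 * m + 3}

theorem mem_prescribedDifferences {m i : ℕ} (hi : i ∈ prescribedDifferences m) :
    3 ≤ i ∧ i ≤ 3 * m + 3 := by
  unfold prescribedDifferences at hi
  split_ifs at hi
  · obtain ⟨k, hk, rfl⟩ := Multiset.mem_map.1 hi
    simp only [Multiset.mem_range] at hk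
    omega
  · simp only [Multiset.mem_add, Multiset.mem_map, Multiset.mem_range,
      Multiset.mem_singleton] at hi
    rcases hi with ⟨k, hk, rfl⟩ | rfl <;> omega

theorem count_prescribedDifferences {m v : ℕ} (hv : 0 < v) (hvn : v < 6 * m + 5) :
    let R := {1, 1, 2} + prescribedDifferences m
    R.count v + R.count (6 * m + 5 - v) = if v = 1 ∨ v = 6 * m + 4 then 2 else 1 := by
  unfold prescribedDifferences
  split_ifs <;>
    simp only [Multiset.count_add, Multiset.count_map_add_range, Multiset.insert_eq_cons,
      Multiset.count_cons, Multiset.count_singleton] <;>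
    split_ifs <;> omega

theorem count_natCast_prescribedDifferences {m : ℕ} {d : ZMod (6 * m + 5)} (hd : d ≠ 0) :
    let F : Multiset (ZMod (6 * m + 5)) := ({1, 1, 2} + prescribedDifferences m).map Nat.cast
    F.count d + F.count (-d) = if d = 1 ∨ d = -1 then 2 else 1 := by
  intro F
  have hR : ∀ i ∈ {1, 1, 2} + prescribedDifferences m, i < 6 * m + 5 := by
    intro i hi
    rcases Multiset.mem_add.1 hi with hi | hi
    · simp only [Multiset.insert_eq_cons, Multiset.mem_cons, Multiset.mem_singleton] at hi
      omega
    · exact (mem_prescribedDifferences hi).2.trans_lt (by omega)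
  have hneg : (-d).val = 6 * m + 5 - d.val := by rw [ZMod.neg_val, if_neg hd]
  have hone : 1 < 6 * m + 5 := by omega
  simp only [F, ZMod.count_map_natCast hR, hneg,
    count_prescribedDifferences (ZMod.val_pos.2 hd) d.val_lt]
  refine if_congr ?_ rfl rfl
  rw [← ZMod.val_eq_one hone, ← neg_eq_iff_eq_neg, ← ZMod.val_eq_one hone, hneg]
  have := d.val_lt
  omega

theorem bounds_of_bind_eq_prescribedDifferences {m : ℕ} {T : Finset (ℕ × ℕ)}
    (hdiff : (T.val.bind fun p => ({p.1, p.2 - p.1, p.2} : Multiset ℕ)) =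
      prescribedDifferences m) :
    ∀ p ∈ T, 3 ≤ p.1 ∧ 3 ≤ p.2 - p.1 ∧ p.2 ≤ 3 * m + 3 := by
  intro p hp
  have hmem : ∀ s ∈ ({p.1, p.2 - p.1, p.2} : Multiset ℕ), 3 ≤ s ∧ s ≤ 3 * m + 3 :=
    fun s hs => mem_prescribedDifferences (hdiff ▸ Multiset.mem_bind.2 ⟨p, hp, hs⟩)
  simp only [Multiset.insert_eq_cons, Multiset.forall_mem_cons, Multiset.mem_singleton,
    forall_eq] at hmem
  omega

theorem stmt_16_general (m : ℕ) (T : Finset (ℕ × ℕ))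
    (hdiff : (T.val.bind fun p => ({p.1, p.2 - p.1, p.2} : Multiset ℕ)) =
      (if m % 4 = 0 ∨ m % 4 = 1 then
        (Multiset.range (3 * m)).map (· + 3)
      else
        (Multiset.range (3 * m - 1)).map (· + 3) + {3 * m + 3})) :
    let B : Multiset (Finset (ZMod (6 * m + 5))) :=
      ((Multiset.range (6 * m + 5)).map fun i =>
        ({(i : ZMod (6 * m + 5)), (i : ZMod (6 * m + 5)) + 1,
          (i : ZMod (6 * m + 5)) - 1} : Finset (ZMod (6 * m + 5)))) +
      ((Multiset.range (6 * m + 5)).bind fun i =>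
        T.val.map fun p =>
          ({(i : ZMod (6 * m + 5)),
            (i : ZMod (6 * m + 5)) + (p.1 : ZMod (6 * m + 5)),
            (i : ZMod (6 * m + 5)) + (p.2 : ZMod (6 * m + 5))} :
            Finset (ZMod (6 * m + 5))))
    ∀ x y : ZMod (6 * m + 5), x ≠ y →
      Multiset.card (B.filter fun b => x ∈ b ∧ y ∈ b) =
        if y = x + 1 ∨ x = y + 1 then 2 else 1 := by
  intro B x y hxy
  have hT := bounds_of_bind_eq_prescribedDifferences hdiff
  have hdistinct := baseTriples_pairwise_ne (n := 6 * m + 5) (by omega) (P := T.val)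
    fun p hp => by have := hT p hp; omega
  have hadj : (y - x = 1 ∨ y - x = -1) ↔ (y = x + 1 ∨ x = y + 1) := by grind
  rw [show B = _ from blocks_eq_bind_development (6 * m + 5) T.val,
    card_filter_bind_development _ hdistinct hxy,
    bind_tripleDifferences_baseTriples _ fun p hp => by have := hT p hp; omega, hdiff,
    ← neg_sub y x, ← if_congr hadj rfl rfl]
  exact count_natCast_prescribedDifferences (sub_ne_zero.2 hxy.symm)

/-- given a set T of m triples (0, x, z) whose differences cover
{3,...,3m+2} (resp. {3,...,3m+1,3m+3}) exactly once, the translates modulo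
n = 6m + 5 of {0, 1, n-1} and of the triples of T form a regular-graph design
with λ = 1 and block size 3 for the cycle Cₙ. -/
theorem stmt_16 (m : ℕ) (hm : 1 ≤ m) (T : Finset (ℕ × ℕ))
    (hcard : T.card = m)
    (hpos : ∀ p ∈ T, 0 < p.1 ∧ p.1 < p.2)
    (hdiff : (T.val.bind fun p => ({p.1, p.2 - p.1, p.2} : Multiset ℕ)) =
      (if m % 4 = 0 ∨ m % 4 = 1 then
        (Multiset.range (3 * m)).map (· + 3)
      else
        (Multiset.range (3 * m - 1)).map (· + 3) + {3 * m + 3})) :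
    let B : Multiset (Finset (ZMod (6 * m + 5))) :=
      ((Multiset.range (6 * m + 5)).map fun i =>
        ({(i : ZMod (6 * m + 5)), (i : ZMod (6 * m + 5)) + 1,
          (i : ZMod (6 * m + 5)) - 1} : Finset (ZMod (6 * m + 5)))) +
      ((Multiset.range (6 * m + 5)).bind fun i =>
        T.val.map fun p =>
          ({(i : ZMod (6 * m + 5)),
            (i : ZMod (6 * m + 5)) + (p.1 : ZMod (6 * m + 5)),
            (i : ZMod (6 * m + 5)) + (p.2 : ZMod (6 * m + 5))} :
            Finset (ZMod (6 * m + 5))))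
    ∀ x y : ZMod (6 * m + 5), x ≠ y →
      Multiset.card (B.filter fun b => x ∈ b ∧ y ∈ b) =
        if y = x + 1 ∨ x = y + 1 then 2 else 1 :=
  stmt_16_general m T hdiff
end

section
/- Suppose there exist regular-graph designs with λ=1 and block size k = δ+1 of orders g and m (for δ-regular graphs with girth ≥ 5), and a (δ+1)-GDD of type gᵘ m¹. Then there exists a regular-graph design with λ=1 and block size δ+1 of order gu + m, for a δ-regular graph with girth ≥ 5 that is the disjoint union of the graphs on the groups. -/
open scoped Classical

/-- A regular-graph design with λ = 1 and block size δ + 1 for the graph `G`: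
adjacent pairs occur in exactly 2 blocks, non-adjacent pairs in exactly 1. -/
def IsRGDesign {V : Type*} [DecidableEq V] (δ : ℕ) (G : SimpleGraph V)
    (B : Multiset (Finset V)) : Prop :=
  (∀ b ∈ B, b.card = δ + 1) ∧
  ∀ x y : V, x ≠ y →
    Multiset.card (B.filter fun b => x ∈ b ∧ y ∈ b) =
      if G.Adj x y then 2 else 1

/-- There is a regular-graph design with λ = 1 of order n for some δ-regular
graph with girth at least 5. -/
def ExistsRGD (δ n : ℕ) : Prop :=
  ∃ (G : SimpleGraph (Fin n)) (B : Multiset (Finset (Fin n))),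
    G.IsRegularOfDegree δ ∧ 5 ≤ G.girth ∧ IsRGDesign δ G B

/-!
Put a copy of the design of order `g` on every group of size `g` and a copy of the design of
order `m` on the group of size `m`, and add the blocks of the GDD. A pair inside a group is covered only by that
group's design and a pair across groups only by the GDD, so the pair counts are those of the
disjoint union of the group graphs. This union is `δ`-regular, and since no edge joins two
groups every cycle stays inside one group, so its girth is the least girth of the pieces.
-/

open Function

namespace SimpleGraph

variable {V W ι : Type*}

theorem Walk.forall_mem_support_of_adj_closed {G : SimpleGraph V} {S : Set V}
    (hS : ∀ ⦃x y⦄, G.Adj x y → x ∈ S → y ∈ S) :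
    ∀ {u v : V} (p : G.Walk u v), u ∈ S → ∀ z ∈ p.support, z ∈ S
  | _, _, .nil, hu => by simpa using hu
  | _, _, .cons h p, hu => by
    simp only [support_cons, List.mem_cons, forall_eq_or_imp]
    exact ⟨hu, p.forall_mem_support_of_adj_closed hS (hS h hu)⟩

theorem egirth_map (f : V ↪ W) (G : SimpleGraph V) : (G.map f).egirth = G.egirth := by
  refine le_antisymm (IsContained.egirth_le ⟨(Embedding.map f G).toCopy⟩) (le_egirth.mpr ?_)
  intro a w hw
  -- A cycle of `G.map f` lies in the range of `f`, on which `G.map f` is a copy of `G`.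
  let φ := Embedding.map f G
  have hrange : ∀ ⦃x y⦄, (G.map f).Adj x y → x ∈ Set.range φ := by
    rintro _ _ ⟨-, x, -, -, rfl, -⟩
    exact ⟨x, rfl⟩
  have hsupp := w.forall_mem_support_of_adj_closed (fun x y h _ => hrange h.symm)
    (hrange (w.adj_snd hw.not_nil))
  let incl := Embedding.induce (G := G.map f) (Set.range φ)
  have hind : ((w.induce _ hsupp).map incl.toHom).IsCycle := by
    rwa [Walk.map_induce]
  have hcyc := (Walk.isCycle_map_iff_of_injective (f := φ.isoInduceRange.symm.toHom)
    φ.isoInduceRange.symm.injective).mpr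
    ((Walk.isCycle_map_iff_of_injective incl.injective).mp hind)
  have hlen : (w.induce _ hsupp).length = w.length := by
    rw [← Walk.length_map incl.toHom, Walk.map_induce]; rfl
  simpa [hlen] using egirth_le_length hcyc

theorem degree_map (f : V ↪ W) (G : SimpleGraph V) (v : V)
    [Fintype ((G.map f).neighborSet (f v))] [Fintype (G.neighborSet v)] :
    (G.map f).degree (f v) = G.degree v := by
  simp only [← card_neighborSet_eq_degree, ← Nat.card_eq_fintype_card, neighborSet_map,
    Nat.card_image_of_injective f.injective]

section iSup

variable {H : ι → SimpleGraph V} {P : ι → Set V}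

theorem exists_mem_of_iSup_adj (hHP : ∀ t, (H t).support ⊆ P t) {x y : V}
    (h : (⨆ t, H t).Adj x y) : ∃ t, x ∈ P t ∧ y ∈ P t := by
  obtain ⟨t, h⟩ := iSup_adj.mp h
  exact ⟨t, hHP t ⟨y, h⟩, hHP t ⟨x, h.symm⟩⟩

theorem iSup_adj_iff_of_mem (hP : Pairwise (Disjoint on P)) (hHP : ∀ t, (H t).support ⊆ P t)
    {t : ι} {x y : V} (hx : x ∈ P t) : (⨆ t, H t).Adj x y ↔ (H t).Adj x y := by
  refine ⟨fun h => ?_, fun h => iSup_adj.mpr ⟨t, h⟩⟩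
  obtain ⟨s, h⟩ := iSup_adj.mp h
  obtain rfl : s = t := hP.eq (Set.not_disjoint_iff.mpr ⟨x, hHP s ⟨y, h⟩, hx⟩)
  exact h

theorem degree_iSup_of_mem (hP : Pairwise (Disjoint on P)) (hHP : ∀ t, (H t).support ⊆ P t)
    {t : ι} {x : V} (hx : x ∈ P t) [Fintype ((⨆ t, H t).neighborSet x)]
    [Fintype ((H t).neighborSet x)] : (⨆ t, H t).degree x = (H t).degree x := by
  simp only [← card_neighborSet_eq_degree]
  exact Fintype.card_congr (Equiv.setCongr (Set.ext fun y => iSup_adj_iff_of_mem hP hHP hx))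

theorem egirth_iSup (hP : Pairwise (Disjoint on P)) (hHP : ∀ t, (H t).support ⊆ P t) :
    (⨆ t, H t).egirth = ⨅ t, (H t).egirth := by
  refine le_antisymm (le_iInf fun t => egirth_anti (le_iSup H t)) (le_egirth.mpr ?_)
  intro a w hw
  obtain ⟨t, ha, -⟩ := exists_mem_of_iSup_adj hHP (w.adj_snd hw.not_nil)
  have hsupp := w.forall_mem_support_of_adj_closed (S := P t)
    (fun x y h hx => hHP t ⟨x, ((iSup_adj_iff_of_mem hP hHP hx).mp h).symm⟩) ha
  have hedges : ∀ e ∈ w.edges, e ∈ (H t).edgeSet := by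
    intro e he
    induction e using Sym2.ind with
    | h x y =>
      exact (iSup_adj_iff_of_mem hP hHP (hsupp x (w.fst_mem_support_of_mem_edges he))).mp
        (w.adj_of_mem_edges he)
  exact iInf_le_of_le t (by simpa using egirth_le_length (hw.transfer hedges))

theorem le_girth_iSup [Nonempty ι] (hP : Pairwise (Disjoint on P))
    (hHP : ∀ t, (H t).support ⊆ P t) {n : ℕ} (hn : n ≠ 0) (h : ∀ t, n ≤ (H t).girth) :
    n ≤ (⨆ t, H t).girth := by
  have hne : ∀ t, (H t).egirth ≠ ⊤ := fun t htop => hn (by simpa [girth, htop] using h t)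
  have hle : ∀ t, (n : ℕ∞) ≤ (H t).egirth := fun t =>
    (Nat.cast_le.mpr (h t)).trans (ENat.natCast_toNat_le_self _)
  obtain ⟨t⟩ := ‹Nonempty ι›
  rw [girth, egirth_iSup hP hHP]
  simpa using ENat.toNat_le_toNat (le_iInf hle) (ne_top_of_le_ne_top (hne t) (iInf_le _ t))

end iSup

end SimpleGraph

theorem Finset.pairwise_disjoint_coe {α ι : Type*} {P : ι → Finset α}
    (hP : Pairwise (Disjoint on P)) : Pairwise (Disjoint on fun t => (P t : Set α)) :=
  hP.mono fun _ _ => Finset.disjoint_coe.mpr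

section Design

variable {V W ι : Type*} [Fintype V] [DecidableEq V]

/-- `ExistsRGD δ n` transplanted onto an `n`-subset `s` of a larger vertex type: the graph and
the blocks live on `s`, pairs outside `s` are not covered. -/
structure IsRGDOn (δ : ℕ) (s : Finset V) (H : SimpleGraph V) (D : Multiset (Finset V)) :
    Prop where
  support_subset : H.support ⊆ s
  degree_eq : ∀ x ∈ s, H.degree x = δ
  five_le_girth : 5 ≤ H.girth
  subset_of_mem : ∀ b ∈ D, b ⊆ s
  card_of_mem : ∀ b ∈ D, b.card = δ + 1
  card_filter_pair : ∀ x ∈ s, ∀ y ∈ s, x ≠ y →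
    Multiset.card (D.filter fun b => x ∈ b ∧ y ∈ b) = if H.Adj x y then 2 else 1

structure IsGDD (k : ℕ) (P : ι → Finset V) (ℬ : Multiset (Finset V)) : Prop where
  card_of_mem : ∀ b ∈ ℬ, b.card = k
  not_pair_mem : ∀ x y, x ≠ y → (∃ t, x ∈ P t ∧ y ∈ P t) → ∀ b ∈ ℬ, ¬(x ∈ b ∧ y ∈ b)
  card_filter_pair : ∀ x y, x ≠ y → ¬(∃ t, x ∈ P t ∧ y ∈ P t) →
    Multiset.card (ℬ.filter fun b => x ∈ b ∧ y ∈ b) = 1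

variable {δ : ℕ}

theorem isRGDOn_map [Fintype W] [DecidableEq W] (f : W ↪ V) {G : SimpleGraph W}
    {B : Multiset (Finset W)} (hreg : G.IsRegularOfDegree δ) (hgirth : 5 ≤ G.girth)
    (hdes : IsRGDesign δ G B) :
    IsRGDOn δ (Finset.univ.map f) (G.map f) (B.map (Finset.map f)) where
  support_subset := by simp [SimpleGraph.support_map]
  degree_eq := by
    simp only [Finset.mem_map, Finset.mem_univ, true_and, forall_exists_index,
      forall_apply_eq_imp_iff]
    intro a
    rw [SimpleGraph.degree_map]
    exact hreg a
  five_le_girth := by rwa [SimpleGraph.girth, SimpleGraph.egirth_map]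
  subset_of_mem := by
    simp only [Multiset.mem_map, forall_exists_index, and_imp, forall_apply_eq_imp_iff₂]
    exact fun b _ => Finset.map_subset_map.mpr (Finset.subset_univ b)
  card_of_mem := by
    simp only [Multiset.mem_map, forall_exists_index, and_imp, forall_apply_eq_imp_iff₂,
      Finset.card_map]
    exact hdes.1
  card_filter_pair := by
    simp only [Finset.mem_map, Finset.mem_univ, true_and, forall_exists_index,
      forall_apply_eq_imp_iff]
    intro a c hac
    rw [Multiset.filter_map, Multiset.card_map, SimpleGraph.map_adj_apply,
      ← hdes.2 a c (f.injective.ne_iff.mp hac)]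
    simp only [Function.comp_def, Finset.mem_map' f]

theorem ExistsRGD.exists_isRGDOn {n : ℕ} (h : ExistsRGD δ n) {s : Finset V} (hs : s.card = n) :
    ∃ H D, IsRGDOn δ s H D := by
  obtain ⟨G, B, hreg, hgirth, hdes⟩ := h
  have hf : Finset.univ.map ((s.equivFinOfCardEq hs).symm.toEmbedding.trans
      (Function.Embedding.subtype (· ∈ s))) = s := by
    rw [← Finset.map_map, Finset.map_univ_equiv, Finset.univ_eq_attach, Finset.attach_map_val]
  exact ⟨_, _, hf ▸ isRGDOn_map _ hreg hgirth hdes⟩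

variable {P : ι → Finset V} {H : ι → SimpleGraph V} {D : ι → Multiset (Finset V)}

theorem isRegularOfDegree_iSup (hP : Pairwise (Disjoint on P)) (hcover : ∀ x, ∃ t, x ∈ P t)
    (hloc : ∀ t, IsRGDOn δ (P t) (H t) (D t)) : (⨆ t, H t).IsRegularOfDegree δ := fun x => by
  obtain ⟨t, hx⟩ := hcover x
  rw [SimpleGraph.degree_iSup_of_mem (Finset.pairwise_disjoint_coe hP)
    (fun t => (hloc t).support_subset) (Finset.mem_coe.mpr hx)]
  exact (hloc t).degree_eq x hx

theorem five_le_girth_iSup [Nonempty ι] (hP : Pairwise (Disjoint on P))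
    (hloc : ∀ t, IsRGDOn δ (P t) (H t) (D t)) : 5 ≤ (⨆ t, H t).girth :=
  SimpleGraph.le_girth_iSup (Finset.pairwise_disjoint_coe hP) (fun t => (hloc t).support_subset)
    (by norm_num) fun t => (hloc t).five_le_girth

theorem isRGDesign_iSup_sum_add [Fintype ι] (hP : Pairwise (Disjoint on P))
    (hloc : ∀ t, IsRGDOn δ (P t) (H t) (D t)) {ℬ : Multiset (Finset V)}
    (hℬ : IsGDD (δ + 1) P ℬ) : IsRGDesign δ (⨆ t, H t) (∑ t, D t + ℬ) := by
  refine ⟨fun b hb => ?_, fun x y hxy => ?_⟩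
  · rcases Multiset.mem_add.mp hb with hb | hb
    · obtain ⟨t, -, hb⟩ := Multiset.mem_sum.mp hb
      exact (hloc t).card_of_mem b hb
    · exact hℬ.card_of_mem b hb
  have hsplit : Multiset.card ((∑ t, D t + ℬ).filter fun b => x ∈ b ∧ y ∈ b) =
      ∑ t, Multiset.card ((D t).filter fun b => x ∈ b ∧ y ∈ b) +
        Multiset.card (ℬ.filter fun b => x ∈ b ∧ y ∈ b) := by
    simp only [← Multiset.countP_eq_card_filter, Multiset.countP_add,
      ← Multiset.coe_countPAddMonoidHom, map_sum]
  have hD : ∀ t, ¬(x ∈ P t ∧ y ∈ P t) →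
      Multiset.card ((D t).filter fun b => x ∈ b ∧ y ∈ b) = 0 := by
    rintro t hnot
    rw [Multiset.card_eq_zero, Multiset.filter_eq_nil]
    exact fun b hb ⟨hxb, hyb⟩ =>
      hnot ⟨(hloc t).subset_of_mem b hb hxb, (hloc t).subset_of_mem b hb hyb⟩
  by_cases hsame : ∃ t, x ∈ P t ∧ y ∈ P t
  · obtain ⟨t, hx, hy⟩ := hsame
    have hother : ∀ s ∈ Finset.univ, s ≠ t →
        Multiset.card ((D s).filter fun b => x ∈ b ∧ y ∈ b) = 0 := fun s _ hst =>
      hD s fun h => hst (hP.eq (Finset.not_disjoint_iff.mpr ⟨x, h.1, hx⟩))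
    have hℬ0 : Multiset.card (ℬ.filter fun b => x ∈ b ∧ y ∈ b) = 0 :=
      Multiset.card_eq_zero.mpr (Multiset.filter_eq_nil.mpr (hℬ.not_pair_mem x y hxy ⟨t, hx, hy⟩))
    rw [hsplit, Finset.sum_eq_single t hother (by simp), hℬ0, add_zero,
      (hloc t).card_filter_pair x hx y hy hxy, SimpleGraph.iSup_adj_iff_of_mem
        (Finset.pairwise_disjoint_coe hP) (fun t => (hloc t).support_subset)
        (Finset.mem_coe.mpr hx)]
  · have hnadj : ¬(⨆ t, H t).Adj x y := fun h =>
      hsame (SimpleGraph.exists_mem_of_iSup_adj (fun t => (hloc t).support_subset) h)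
    rw [hsplit, Finset.sum_eq_zero fun t _ => hD t fun h => hsame ⟨t, h⟩,
      hℬ.card_filter_pair x y hxy hsame, if_neg hnadj]

end Design

theorem stmt_18_general (δ g m u : ℕ)
    (hg : ExistsRGD δ g) (hm : ExistsRGD δ m)
    (groups : Fin u → Finset (Fin (g * u + m)))
    (M : Finset (Fin (g * u + m)))
    (ℬ : Finset (Finset (Fin (g * u + m))))
    (hgsz : ∀ i, (groups i).card = g) (hMsz : M.card = m)
    (hdisj : ∀ i j, i ≠ j → Disjoint (groups i) (groups j))
    (hdisjM : ∀ i, Disjoint (groups i) M)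
    (hcover : ∀ x, (∃ i, x ∈ groups i) ∨ x ∈ M)
    (hbsize : ∀ b ∈ ℬ, b.card = δ + 1)
    (hsame : ∀ x y : Fin (g * u + m), x ≠ y →
      ((∃ i, x ∈ groups i ∧ y ∈ groups i) ∨ (x ∈ M ∧ y ∈ M)) →
      ∀ b ∈ ℬ, ¬(x ∈ b ∧ y ∈ b))
    (hcross : ∀ x y : Fin (g * u + m), x ≠ y →
      ¬((∃ i, x ∈ groups i ∧ y ∈ groups i) ∨ (x ∈ M ∧ y ∈ M)) →
      (ℬ.filter fun b => x ∈ b ∧ y ∈ b).card = 1) :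
    ∃ (G : SimpleGraph (Fin (g * u + m))) (B : Multiset (Finset (Fin (g * u + m)))),
      G.IsRegularOfDegree δ ∧ 5 ≤ G.girth ∧ IsRGDesign δ G B ∧
      ∀ x y, G.Adj x y →
        ((∃ i, x ∈ groups i ∧ y ∈ groups i) ∨ (x ∈ M ∧ y ∈ M)) := by
  let P : Option (Fin u) → Finset (Fin (g * u + m)) := fun t => t.elim M groups
  have hiff : ∀ x y, (∃ t, x ∈ P t ∧ y ∈ P t) ↔
      ((∃ i, x ∈ groups i ∧ y ∈ groups i) ∨ (x ∈ M ∧ y ∈ M)) := by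
    simp [P, Option.exists, or_comm]
  have hP : Pairwise (Disjoint on P) := by
    rintro (_ | i) (_ | j) hij
    · exact absurd rfl hij
    · exact (hdisjM j).symm
    · exact hdisjM i
    · exact hdisj i j fun h => hij (congrArg some h)
  have hPcover : ∀ x, ∃ t, x ∈ P t := fun x =>
    (hcover x).elim (fun ⟨i, h⟩ => ⟨some i, h⟩) fun h => ⟨none, h⟩
  have hℬ : IsGDD (δ + 1) P ℬ.val :=
    ⟨hbsize, fun x y hxy h => hsame x y hxy ((hiff x y).mp h),
      fun x y hxy h => hcross x y hxy (mt (hiff x y).mpr h)⟩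
  have hloc : ∀ t, ∃ H D, IsRGDOn δ (P t) H D := by
    rintro (_ | i)
    exacts [hm.exists_isRGDOn hMsz, hg.exists_isRGDOn (hgsz i)]
  choose H D hloc using hloc
  exact ⟨⨆ t, H t, ∑ t, D t + ℬ.val, isRegularOfDegree_iSup hP hPcover hloc,
    five_le_girth_iSup hP hloc, isRGDesign_iSup_sum_add hP hloc hℬ, fun x y h =>
      (hiff x y).mp (SimpleGraph.exists_mem_of_iSup_adj (fun t => (hloc t).support_subset) h)⟩

/-- Wilson-style construction. Given regular-graph designs of
orders g and m and a (δ+1)-GDD of type gᵘ m¹, there is a regular-graph design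
of order gu + m whose graph is δ-regular with girth ≥ 5 and is the disjoint
union of graphs placed on the groups. -/
theorem stmt_18 (δ g m u : ℕ) (hδ : 1 ≤ δ)
    (hg : ExistsRGD δ g) (hm : ExistsRGD δ m)
    (groups : Fin u → Finset (Fin (g * u + m)))
    (M : Finset (Fin (g * u + m)))
    (ℬ : Finset (Finset (Fin (g * u + m))))
    (hgsz : ∀ i, (groups i).card = g) (hMsz : M.card = m)
    (hdisj : ∀ i j, i ≠ j → Disjoint (groups i) (groups j))
    (hdisjM : ∀ i, Disjoint (groups i) M)
    (hcover : ∀ x, (∃ i, x ∈ groups i) ∨ x ∈ M)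
    (hbsize : ∀ b ∈ ℬ, b.card = δ + 1)
    (hsame : ∀ x y : Fin (g * u + m), x ≠ y →
      ((∃ i, x ∈ groups i ∧ y ∈ groups i) ∨ (x ∈ M ∧ y ∈ M)) →
      ∀ b ∈ ℬ, ¬(x ∈ b ∧ y ∈ b))
    (hcross : ∀ x y : Fin (g * u + m), x ≠ y →
      ¬((∃ i, x ∈ groups i ∧ y ∈ groups i) ∨ (x ∈ M ∧ y ∈ M)) →
      (ℬ.filter fun b => x ∈ b ∧ y ∈ b).card = 1) :
    ∃ (G : SimpleGraph (Fin (g * u + m))) (B : Multiset (Finset (Fin (g * u + m)))),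
      G.IsRegularOfDegree δ ∧ 5 ≤ G.girth ∧ IsRGDesign δ G B ∧
      ∀ x y, G.Adj x y →
        ((∃ i, x ∈ groups i ∧ y ∈ groups i) ∨ (x ∈ M ∧ y ∈ M)) :=
  stmt_18_general δ g m u hg hm groups M ℬ hgsz hMsz hdisj hdisjM hcover hbsize hsame hcross
end
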